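/- arXiv:2312.13750 — 4 statements merged into one kernel-verified Lean document; each statement's English description precedes it below -/
import Mathlib

section
/- Let σ = x_0...x_k z_1...z_ℓ be a facet of X(n), where the x_i are blocks of size ≥ 2 and the z_j are singleton blocks. Then a codimension-one face τ of σ lies in some facet with strictly more singleton blocks than σ if and only if τ is obtained from σ by deleting one of the blocks x_i of size ≥ 2. -/
/-- A face of `X(n)`: a set of pairwise disjoint proper nonempty subsets of `{1,…,n}`. -/
def IsFace (n : ℕ) (σ : Finset (Finset (Fin n))) : Prop :=
  (∀ x ∈ σ, x.Nonempty ∧ x ≠ Finset.univ) ∧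
  ((σ : Set (Finset (Fin n))).Pairwise fun a b => Disjoint a b)

/-- A facet: a face maximal under inclusion. -/
def IsFacet (n : ℕ) (σ : Finset (Finset (Fin n))) : Prop :=
  IsFace n σ ∧ ∀ τ, IsFace n τ → σ ⊆ τ → σ = τ

/-- Number of singleton blocks. -/
def singles (n : ℕ) (σ : Finset (Finset (Fin n))) : ℕ :=
  (σ.filter fun b => b.card = 1).card

lemma singleton_ne_univ {n : ℕ} (hn : 2 ≤ n) (z : Fin n) :
    ({z} : Finset (Fin n)) ≠ Finset.univ := by
  intro e
  have h1 : ({z} : Finset (Fin n)).card = 1 := Finset.card_singleton z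
  rw [e, Finset.card_univ, Fintype.card_fin] at h1
  omega

/-- Every facet covers every point. -/
lemma facet_cover {n : ℕ} (hn : 2 ≤ n) {σ : Finset (Finset (Fin n))}
    (hσ : IsFacet n σ) (z : Fin n) : ∃ c ∈ σ, z ∈ c := by
  by_contra h
  push_neg at h
  have hface : IsFace n (insert {z} σ) := by
    constructor
    · intro x hx
      rcases Finset.mem_insert.mp hx with rfl | hx
      · exact ⟨Finset.singleton_nonempty z, singleton_ne_univ hn z⟩
      · exact hσ.1.1 x hx
    · intro a ha c hc hac
      simp only [Finset.coe_insert, Set.mem_insert_iff, Finset.mem_coe] at ha hc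
      rcases ha with rfl | ha <;> rcases hc with rfl | hc
      · exact absurd rfl hac
      · exact Finset.disjoint_singleton_left.mpr (h c hc)
      · exact Finset.disjoint_singleton_right.mpr (h a ha)
      · exact hσ.1.2 ha hc hac
  have heq := hσ.2 _ hface (Finset.subset_insert _ _)
  have hmem : ({z} : Finset (Fin n)) ∈ σ := heq ▸ Finset.mem_insert_self _ _
  exact h _ hmem (Finset.mem_singleton_self z)

/-- A face covering every point is a facet. -/
lemma cover_facet {n : ℕ} {σ : Finset (Finset (Fin n))}
    (hf : IsFace n σ) (hc : ∀ z : Fin n, ∃ c ∈ σ, z ∈ c) : IsFacet n σ := by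
  refine ⟨hf, fun τ hτ hsub => ?_⟩
  refine Finset.Subset.antisymm hsub fun c hc' => ?_
  obtain ⟨z, hz⟩ := (hτ.1 c hc').1
  obtain ⟨d, hd, hzd⟩ := hc z
  have hcd : c = d := by
    by_contra hne
    exact Finset.disjoint_left.mp
      (hτ.2 (Finset.mem_coe.mpr hc') (Finset.mem_coe.mpr (hsub hd)) hne) hz hzd
  exact hcd ▸ hd

/-- Let `σ` be a facet of `X(n)` and `b ∈ σ` one of its blocks.  The codimension-one face
`σ \ {b}` lies in some facet with strictly more singleton blocks than `σ` if and only if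
`b` has size at least 2. -/
theorem stmt6 (n : ℕ) (hn : 2 ≤ n) (σ : Finset (Finset (Fin n)))
    (hσ : IsFacet n σ) (b : Finset (Fin n)) (hb : b ∈ σ) :
    (∃ τ, IsFacet n τ ∧ singles n σ < singles n τ ∧ σ.erase b ⊆ τ) ↔ 2 ≤ b.card := by
  have hbne : b.Nonempty := (hσ.1.1 b hb).1
  constructor
  · rintro ⟨τ, hτ, hlt, hsub⟩
    by_contra hcard
    push_neg at hcard
    have hb1 : b.card = 1 := le_antisymm (by omega) (Finset.card_pos.mpr hbne)
    obtain ⟨z, hbz⟩ := Finset.card_eq_one.mp hb1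
    subst hbz
    -- show b ∈ τ, hence σ ⊆ τ, hence σ = τ, contradicting hlt
    obtain ⟨c, hcτ, hzc⟩ := facet_cover hn hτ z
    have hcb : c = {z} := by
      refine Finset.Subset.antisymm (fun w hwc => ?_) (Finset.singleton_subset_iff.mpr hzc)
      obtain ⟨d, hdσ, hwd⟩ := facet_cover hn hσ w
      by_cases hdb : d = {z}
      · exact hdb ▸ hwd
      · exfalso
        have hdτ : d ∈ τ := hsub (Finset.mem_erase.mpr ⟨hdb, hdσ⟩)
        have hcd : c ≠ d := by
          rintro rfl
          exact hdb (Finset.eq_singleton_iff_unique_mem.mpr ⟨hzc, fun x hx => by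
            by_contra hxz
            -- x ∈ c = d ∈ σ, z ∈ c; use that z ∈ {z} ∈ σ and c ∈ σ disjoint
            have := hσ.1.2 (Finset.mem_coe.mpr hdσ) (Finset.mem_coe.mpr hb)
              (fun e => hdb e)
            exact Finset.disjoint_left.mp this hzc (Finset.mem_singleton_self z)⟩)
        exact Finset.disjoint_left.mp
          (hτ.1.2 (Finset.mem_coe.mpr hcτ) (Finset.mem_coe.mpr hdτ) hcd) hwc hwd
    have hστ : σ ⊆ τ := by
      intro d hdσ
      by_cases hdb : d = {z}
      · exact hdb ▸ hcb ▸ hcτ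
      · exact hsub (Finset.mem_erase.mpr ⟨hdb, hdσ⟩)
    have := hσ.2 τ hτ.1 hστ
    rw [this] at hlt
    exact lt_irrefl _ hlt
  · intro hcard
    set τ : Finset (Finset (Fin n)) :=
      σ.erase b ∪ b.image (fun x => ({x} : Finset (Fin n))) with hτdef
    have hdisjb : ∀ c ∈ σ.erase b, Disjoint b c := fun c hc => by
      obtain ⟨hcb, hcσ⟩ := Finset.mem_erase.mp hc
      exact hσ.1.2 (Finset.mem_coe.mpr hb) (Finset.mem_coe.mpr hcσ) (fun e => hcb e.symm)
    have hface : IsFace n τ := by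
      constructor
      · intro x hx
        rcases Finset.mem_union.mp hx with hx | hx
        · exact hσ.1.1 x (Finset.mem_erase.mp hx).2
        · obtain ⟨w, _, rfl⟩ := Finset.mem_image.mp hx
          exact ⟨Finset.singleton_nonempty w, singleton_ne_univ hn w⟩
      · intro a ha c hc hac
        simp only [Finset.mem_coe, hτdef, Finset.mem_union] at ha hc
        rcases ha with ha | ha <;> rcases hc with hc | hc
        · exact hσ.1.2 (Finset.mem_coe.mpr (Finset.mem_erase.mp ha).2)
            (Finset.mem_coe.mpr (Finset.mem_erase.mp hc).2) hac
        · obtain ⟨w, hw, rfl⟩ := Finset.mem_image.mp hc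
          exact Finset.disjoint_singleton_right.mpr
            (fun hwa => Finset.disjoint_left.mp (hdisjb a ha) hw hwa)
        · obtain ⟨w, hw, rfl⟩ := Finset.mem_image.mp ha
          exact Finset.disjoint_singleton_left.mpr
            (fun hwc => Finset.disjoint_left.mp (hdisjb c hc) hw hwc)
        · obtain ⟨w, hw, rfl⟩ := Finset.mem_image.mp ha
          obtain ⟨v, hv, rfl⟩ := Finset.mem_image.mp hc
          have : w ≠ v := fun e => hac (by rw [e])
          simp [Finset.disjoint_singleton_left, this, Ne.symm this]
    have hcov : ∀ z : Fin n, ∃ c ∈ τ, z ∈ c := by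
      intro z
      obtain ⟨d, hdσ, hzd⟩ := facet_cover hn hσ z
      by_cases hdb : d = b
      · exact ⟨{z}, Finset.mem_union_right _
          (Finset.mem_image.mpr ⟨z, hdb ▸ hzd, rfl⟩), Finset.mem_singleton_self z⟩
      · exact ⟨d, Finset.mem_union_left _ (Finset.mem_erase.mpr ⟨hdb, hdσ⟩), hzd⟩
    refine ⟨τ, cover_facet hface hcov, ?_, Finset.subset_union_left⟩
    -- singles σ < singles τ
    unfold singles
    apply Finset.card_lt_card
    constructor
    · intro c hc
      obtain ⟨hcσ, hc1⟩ := Finset.mem_filter.mp hc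
      have hcb : c ≠ b := fun e => by rw [e] at hc1; omega
      exact Finset.mem_filter.mpr
        ⟨Finset.mem_union_left _ (Finset.mem_erase.mpr ⟨hcb, hcσ⟩), hc1⟩
    · intro hsub'
      obtain ⟨x, hx⟩ := hbne
      have hxτ : ({x} : Finset (Fin n)) ∈ τ :=
        Finset.mem_union_right _ (Finset.mem_image.mpr ⟨x, hx, rfl⟩)
      have hxmem := hsub' (Finset.mem_filter.mpr ⟨hxτ, Finset.card_singleton x⟩)
      have hxσ : ({x} : Finset (Fin n)) ∈ σ := (Finset.mem_filter.mp hxmem).1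
      have hne : ({x} : Finset (Fin n)) ≠ b := fun e => by
        rw [← e] at hcard; simp at hcard
      have := hσ.1.2 (Finset.mem_coe.mpr hxσ) (Finset.mem_coe.mpr hb) hne
      exact Finset.disjoint_left.mp this (Finset.mem_singleton_self x) hx
end

section
/- For n ≥ 2 and 0 ≤ q ≤ n-1, the q-th reduced homology of X(n) with integer coefficients is free abelian of rank β(n,q), where β(n,q) is the number of partitions of {1,...,n} into q+1 blocks each of which is a proper subset of size at least 2. -/
/-- The faces of `X(n)` with exactly `q` blocks (dimension `q-1`); `q = 0` gives the
empty face, so these chain groups compute *reduced* homology. -/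
abbrev Faces (n q : ℕ) := {σ : Finset (Finset (Fin n)) // IsFace n σ ∧ σ.card = q}

/-- The group of (reduced, shifted) simplicial `q`-chains of `X(n)`. -/
abbrev Cc (n q : ℕ) := Faces n q →₀ ℤ

/-- A sorting key on blocks, fixing a total order of the vertices of `X(n)`:
first by decreasing size, then lexicographically. -/
def keyB (n : ℕ) (s : Finset (Fin n)) : ℕ :=
  (n - s.card) * 4 ^ n + ∑ i ∈ s, 2 ^ (i : ℕ)

lemma IsFace.erase {n : ℕ} {σ : Finset (Finset (Fin n))} (h : IsFace n σ)
    (b : Finset (Fin n)) : IsFace n (σ.erase b) :=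
  ⟨fun x hx => h.1 x (Finset.mem_of_mem_erase hx),
   h.2.mono (by simp)⟩

/-- The simplicial boundary map, with signs determined by listing the blocks of a face
in increasing `keyB`-order. -/
noncomputable def bdry (n q : ℕ) : Cc n (q + 1) →ₗ[ℤ] Cc n q :=
  Finsupp.lift (Cc n q) ℤ (Faces n (q + 1)) fun σ =>
    ∑ b ∈ σ.1.attach,
      ((-1 : ℤ) ^ (σ.1.filter fun c => keyB n c < keyB n b.1).card) •
        Finsupp.single
          (⟨σ.1.erase b.1,
            σ.2.1.erase b.1,
            by rw [Finset.card_erase_of_mem b.2, σ.2.2]; rfl⟩ : Faces n q) 1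

/-- The `q`-th reduced homology of `X(n)` with integer coefficients:
cycles modulo boundaries. -/
noncomputable def Hred (n q : ℕ) : Type :=
  LinearMap.ker (bdry n q) ⧸
    Submodule.comap (LinearMap.ker (bdry n q)).subtype (LinearMap.range (bdry n (q + 1)))

noncomputable instance (n q : ℕ) : AddCommGroup (Hred n q) :=
  inferInstanceAs (AddCommGroup (LinearMap.ker (bdry n q) ⧸
    Submodule.comap (LinearMap.ker (bdry n q)).subtype (LinearMap.range (bdry n (q + 1)))))

noncomputable instance (n q : ℕ) : Module ℤ (Hred n q) :=
  inferInstanceAs (Module ℤ (LinearMap.ker (bdry n q) ⧸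
    Submodule.comap (LinearMap.ker (bdry n q)).subtype (LinearMap.range (bdry n (q + 1)))))

/-- `β(n,q)`: partitions of `{1,…,n}` into `q+1` proper blocks of size at least 2. -/
noncomputable def betaP (n q : ℕ) : ℕ :=
  Nat.card {σ : Finset (Finset (Fin n)) //
    σ.card = q + 1 ∧ (∀ x ∈ σ, 2 ≤ x.card ∧ x ≠ Finset.univ) ∧
    ((σ : Set (Finset (Fin n))).Pairwise fun a b => Disjoint a b) ∧
    σ.sup id = Finset.univ}

/-!
A vertex of a face `σ` is *loose* if it is not covered by `σ` or forms a singleton block. With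
`m` the least loose vertex, matching `σ` with `σ ∪ {{m}}` (when `m` is uncovered) or with
`σ \ {{m}}` (when `{m} ∈ σ`) is a Morse matching whose unmatched faces are the partitions of
`{1,…,n}` into blocks of size at least two. Removing a block from any face leaves its vertices
uncovered, so every boundary is a noncritical chain. The noncritical chains form an acyclic
subcomplex: the flow `1 - ∂V - V∂` of the matching's gradient `V` strictly lowers the height of
noncritical faces, so every noncritical cycle `z` is `∂(V z)` plus a lower cycle. Hence cycles
modulo boundaries are free on the critical faces with `q + 1` blocks, which `β(n,q)` counts.
-/

open Finset

namespace DisjointSubsetsComplex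

variable {n : ℕ}

section Key

lemma sum_two_pow_lt_four_pow (s : Finset (Fin n)) : ∑ i ∈ s, 2 ^ (i : ℕ) < 4 ^ n :=
  calc ∑ i ∈ s, 2 ^ (i : ℕ) = ∑ j ∈ s.map Fin.valEmbedding, 2 ^ j := by rw [sum_map]; rfl
    _ < 2 ^ n := Nat.geomSum_lt le_rfl (by simp)
    _ ≤ 4 ^ n := Nat.pow_le_pow_left (by norm_num) n

lemma keyB_mod_four_pow (s : Finset (Fin n)) : keyB n s % 4 ^ n = ∑ i ∈ s, 2 ^ (i : ℕ) := by
  rw [keyB, Nat.mul_add_mod', Nat.mod_eq_of_lt (sum_two_pow_lt_four_pow s)]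

lemma keyB_injective : Function.Injective (keyB n) := by
  intro b c h
  have hsum := congrArg (· % 4 ^ n) h
  simp only [keyB_mod_four_pow] at hsum
  refine map_inj.1 (geomSum_injective le_rfl ?_ : b.map Fin.valEmbedding = c.map Fin.valEmbedding)
  simpa only [sum_map, Fin.valEmbedding_apply] using hsum

lemma keyB_singleton (m : Fin n) : keyB n {m} = (n - 1) * 4 ^ n + 2 ^ (m : ℕ) := by
  simp [keyB]

lemma keyB_lt_keyB_singleton {b : Finset (Fin n)} (hb : 2 ≤ #b) (m : Fin n) :
    keyB n b < keyB n {m} := by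
  have hbn : #b ≤ n := (card_le_univ b).trans_eq (Fintype.card_fin n)
  calc keyB n b < (n - #b + 1) * 4 ^ n := by
        rw [keyB, add_one_mul]; exact Nat.add_lt_add_left (sum_two_pow_lt_four_pow b) _
    _ ≤ (n - 1) * 4 ^ n := Nat.mul_le_mul_right _ (by omega)
    _ ≤ keyB n {m} := keyB_singleton m ▸ Nat.le_add_right _ _

lemma keyB_singleton_lt_keyB_singleton {a b : Fin n} : keyB n {a} < keyB n {b} ↔ a < b := by
  rw [keyB_singleton, keyB_singleton, Nat.add_lt_add_iff_left,
    Nat.pow_lt_pow_iff_right (by norm_num), Fin.lt_def]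

end Key

section Boundary

def keyRank (s : Finset (Finset (Fin n))) (x : Finset (Fin n)) : ℕ :=
  #{c ∈ s | keyB n c < keyB n x}

def numLarge (σ : Finset (Finset (Fin n))) : ℕ := #{c ∈ σ | 2 ≤ #c}

lemma keyRank_singleton_eq_numLarge {σ : Finset (Finset (Fin n))} (hσ : ∀ x ∈ σ, x.Nonempty)
    {m : Fin n} (hm : ∀ m', {m'} ∈ σ → m ≤ m') : keyRank σ {m} = numLarge σ := by
  unfold keyRank numLarge
  congr 1
  refine filter_congr fun c hc => ⟨fun hlt => ?_, fun hc2 => keyB_lt_keyB_singleton hc2 m⟩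
  by_contra hc2
  obtain ⟨m', rfl⟩ := (card_eq_one (s := c)).1 (by have := (hσ c hc).card_pos; omega)
  exact (keyB_singleton_lt_keyB_singleton.1 hlt).not_ge (hm m' hc)

lemma keyRank_erase_of_lt {s : Finset (Finset (Fin n))} {b c : Finset (Fin n)} (hb : b ∈ s)
    (h : keyB n b < keyB n c) : keyRank (s.erase b) c + 1 = keyRank s c := by
  rw [keyRank, keyRank, filter_erase, card_erase_add_one (mem_filter.2 ⟨hb, h⟩)]

lemma keyRank_erase_of_not_lt {s : Finset (Finset (Fin n))} {b c : Finset (Fin n)}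
    (h : ¬ keyB n b < keyB n c) : keyRank (s.erase b) c = keyRank s c := by
  rw [keyRank, keyRank, filter_erase,
    erase_eq_of_notMem (s := filter _ s) fun hb => h (mem_filter.1 hb).2]

lemma keyRank_signs_cancel {s : Finset (Finset (Fin n))}
    {b c : Finset (Fin n)} (hb : b ∈ s) (hc : c ∈ s) (hbc : b ≠ c) :
    (-1 : ℤ) ^ keyRank s b * (-1) ^ keyRank (s.erase b) c
      + (-1) ^ keyRank s c * (-1) ^ keyRank (s.erase c) b = 0 := by
  rcases (keyB_injective.ne hbc).lt_or_gt with hlt | hgt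
  · rw [keyRank_erase_of_not_lt hlt.not_gt, ← keyRank_erase_of_lt hb hlt, pow_succ]
    ring
  · rw [keyRank_erase_of_not_lt hgt.not_gt, ← keyRank_erase_of_lt hc hgt, pow_succ]
    ring

def eraseBlock {q : ℕ} (σ : Faces n (q + 1)) {b : Finset (Fin n)} (hb : b ∈ σ.1) :
    Faces n q :=
  ⟨σ.1.erase b, σ.2.1.erase b, by rw [card_erase_of_mem hb, σ.2.2]; rfl⟩

lemma eraseBlock_val {q : ℕ} (σ : Faces n (q + 1)) {b : Finset (Fin n)} (hb : b ∈ σ.1) :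
    (eraseBlock σ hb).1 = σ.1.erase b :=
  rfl

open scoped Classical in
-- Lets boundaries be written as sums over the blocks themselves, without membership proofs.
noncomputable def faceChain (q : ℕ) (τ : Finset (Finset (Fin n))) : Cc n q :=
  if h : IsFace n τ ∧ #τ = q then Finsupp.single ⟨τ, h⟩ 1 else 0

lemma faceChain_val {q : ℕ} (τ : Faces n q) : faceChain q τ.1 = Finsupp.single τ 1 := by
  rw [faceChain, dif_pos τ.2]

lemma faceChain_erase {q : ℕ} (σ : Faces n (q + 1)) {b : Finset (Fin n)} (hb : b ∈ σ.1) :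
    faceChain q (σ.1.erase b) = Finsupp.single (eraseBlock σ hb) 1 :=
  faceChain_val (eraseBlock σ hb)

lemma bdry_single {q : ℕ} (σ : Faces n (q + 1)) :
    bdry n q (Finsupp.single σ 1)
      = ∑ b ∈ σ.1, (-1 : ℤ) ^ keyRank σ.1 b • faceChain q (σ.1.erase b) := by
  rw [bdry, Finsupp.lift_apply, Finsupp.sum_single_index (by simp), one_smul,
    ← sum_attach σ.1]
  exact sum_congr rfl fun b _ => by rw [faceChain_erase σ b.2]; rfl

lemma bdry_bdry_single {q : ℕ} (σ : Faces n (q + 2)) :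
    bdry n q (bdry n (q + 1) (Finsupp.single σ 1)) = 0 := by
  have hterm : ∀ b ∈ σ.1,
      bdry n q ((-1 : ℤ) ^ keyRank σ.1 b • faceChain (q + 1) (σ.1.erase b))
      = ∑ c ∈ σ.1.erase b, ((-1 : ℤ) ^ keyRank σ.1 b * (-1) ^ keyRank (σ.1.erase b) c) •
          faceChain q ((σ.1.erase b).erase c) := fun b hb => by
    rw [faceChain_erase σ hb, map_smul, bdry_single, smul_sum]
    exact sum_congr rfl fun c _ => smul_smul _ _ _
  rw [bdry_single, map_sum, sum_congr rfl hterm, sum_sigma']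
  -- the terms for removing `b` then `c` and `c` then `b` cancel
  refine sum_involution (fun p _ => ⟨p.2, p.1⟩) (fun p hp => ?_) (fun p hp _ h => ?_)
    (fun p hp => ?_) (fun _ _ => rfl)
  · obtain ⟨hb, hc⟩ := mem_sigma.1 hp
    rw [erase_right_comm, ← add_smul, keyRank_signs_cancel hb
      (mem_of_mem_erase hc) (ne_of_mem_erase hc).symm, zero_smul]
  · exact ne_of_mem_erase (mem_sigma.1 hp).2 (congrArg Sigma.fst h)
  · obtain ⟨hb, hc⟩ := mem_sigma.1 hp
    exact mem_sigma.2 ⟨mem_of_mem_erase hc, mem_erase.2 ⟨(ne_of_mem_erase hc).symm, hb⟩⟩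

lemma bdry_bdry (q : ℕ) (x : Cc n (q + 2)) : bdry n q (bdry n (q + 1) x) = 0 := by
  induction x using Finsupp.induction_linear with
  | zero => simp
  | add x y hx hy => simp [hx, hy]
  | single σ r =>
    rw [← mul_one r, ← smul_eq_mul, ← Finsupp.smul_single, map_smul, map_smul,
      bdry_bdry_single, smul_zero]

end Boundary

section Matching

def loose (σ : Finset (Finset (Fin n))) : Finset (Fin n) :=
  univ.filter fun m => {m} ∈ σ ∨ m ∉ σ.sup id

lemma mem_loose {σ : Finset (Finset (Fin n))} {m : Fin n} :
    m ∈ loose σ ↔ {m} ∈ σ ∨ m ∉ σ.sup id := by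
  simp [loose]

lemma singleton_notMem_of_notMem_sup {σ : Finset (Finset (Fin n))} {m : Fin n}
    (hm : m ∉ σ.sup id) : {m} ∉ σ :=
  fun hs => hm (mem_sup.2 ⟨_, hs, mem_singleton_self m⟩)

lemma mem_sup_erase {σ : Finset (Finset (Fin n))} (hf : IsFace n σ) {b : Finset (Fin n)}
    (hb : b ∈ σ) {m : Fin n} : m ∈ (σ.erase b).sup id ↔ m ∈ σ.sup id ∧ m ∉ b := by
  simp only [mem_sup, mem_erase, id]
  constructor
  · rintro ⟨c, ⟨hcb, hc⟩, hm⟩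
    exact ⟨⟨c, hc, hm⟩, disjoint_left.1 (hf.2 hc hb hcb) hm⟩
  · rintro ⟨⟨c, hc, hm⟩, hmb⟩
    exact ⟨c, ⟨fun h => hmb (h ▸ hm), hc⟩, hm⟩

lemma loose_erase {σ : Finset (Finset (Fin n))} (hf : IsFace n σ) {b : Finset (Fin n)}
    (hb : b ∈ σ) : loose (σ.erase b) = loose σ ∪ b := by
  ext m
  rw [mem_union, mem_loose, mem_loose, mem_sup_erase hf hb, mem_erase]
  by_cases hmb : m ∈ b
  · simp [hmb]
  · have hne : {m} ≠ b := fun h => hmb (h ▸ mem_singleton_self m)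
    tauto

lemma loose_insert_singleton {σ : Finset (Finset (Fin n))} {m : Fin n} (hm : m ∉ σ.sup id) :
    loose (insert {m} σ) = loose σ := by
  ext m'
  simp only [mem_loose, mem_insert, sup_insert, id, sup_eq_union, mem_union, singleton_inj,
    mem_singleton]
  by_cases h : m' = m
  · subst h; tauto
  · tauto

lemma isFace_insert_singleton (hn : 2 ≤ n) {σ : Finset (Finset (Fin n))} (hf : IsFace n σ)
    {m : Fin n} (hm : m ∉ σ.sup id) : IsFace n (insert {m} σ) := by
  refine ⟨fun x hx => ?_, ?_⟩
  · rcases mem_insert.1 hx with rfl | hx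
    · refine ⟨singleton_nonempty m, fun h => ?_⟩
      have := congrArg card h
      simp only [card_singleton, card_univ, Fintype.card_fin] at this
      omega
    · exact hf.1 x hx
  · rw [coe_insert]
    refine hf.2.insert fun c hc _ => ?_
    have hdisj : Disjoint {m} c :=
      disjoint_singleton_left.2 fun hmc => hm (mem_sup.2 ⟨c, hc, hmc⟩)
    exact ⟨hdisj, hdisj.symm⟩

def IsUp (σ : Finset (Finset (Fin n))) : Prop :=
  ∃ h : (loose σ).Nonempty, (loose σ).min' h ∉ σ.sup id

lemma singleton_min'_mem_of_not_isUp {σ : Finset (Finset (Fin n))} (h : (loose σ).Nonempty)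
    (hu : ¬ IsUp σ) : {(loose σ).min' h} ∈ σ :=
  (mem_loose.1 (min'_mem _ h)).resolve_right fun hm => hu ⟨h, hm⟩

/-- Along the flow this strictly decreases: when `m` is the least loose vertex, a face matched
upward has height `2m + 1`, a face matched downward (containing `{m}`) has height `2m`. -/
noncomputable def height (σ : Finset (Finset (Fin n))) : ℕ :=
  if h : (loose σ).Nonempty then
    2 * ((loose σ).min' h : ℕ) + if {(loose σ).min' h} ∈ σ then 0 else 1
  else 0

lemma height_of_singleton_mem {σ : Finset (Finset (Fin n))} (h : (loose σ).Nonempty)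
    (hs : {(loose σ).min' h} ∈ σ) : height σ = 2 * ((loose σ).min' h : ℕ) := by
  rw [height, dif_pos h, if_pos hs, add_zero]

lemma height_of_isUp {σ : Finset (Finset (Fin n))} (hu : IsUp σ) :
    height σ = 2 * ((loose σ).min' hu.1 : ℕ) + 1 := by
  rw [height, dif_pos hu.1, if_neg (singleton_notMem_of_notMem_sup hu.2)]

lemma height_le {σ : Finset (Finset (Fin n))} (h : (loose σ).Nonempty) :
    height σ ≤ 2 * ((loose σ).min' h : ℕ) + 1 := by
  rw [height, dif_pos h]
  split <;> omega

lemma height_lt (σ : Finset (Finset (Fin n))) : height σ < 2 * n + 1 := by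
  unfold height
  split
  · have := ((loose σ).min' ‹_›).isLt
    split <;> omega
  · omega

def addPivot (hn : 2 ≤ n) {d : ℕ} (σ : Faces n d) (hu : IsUp σ.1) : Faces n (d + 1) :=
  ⟨insert {(loose σ.1).min' hu.1} σ.1, isFace_insert_singleton hn σ.2.1 hu.2,
    by rw [card_insert_of_notMem (singleton_notMem_of_notMem_sup hu.2), σ.2.2]⟩

section AddPivot

variable (hn : 2 ≤ n) {d : ℕ} (σ : Faces n d) (hu : IsUp σ.1)

lemma loose_addPivot : loose (addPivot hn σ hu).1 = loose σ.1 :=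
  loose_insert_singleton hu.2

lemma min'_loose_addPivot (h : (loose (addPivot hn σ hu).1).Nonempty) :
    (loose (addPivot hn σ hu).1).min' h = (loose σ.1).min' hu.1 := by
  simp only [loose_addPivot]

lemma singleton_mem_addPivot : {(loose σ.1).min' hu.1} ∈ (addPivot hn σ hu).1 :=
  mem_insert_self _ _

lemma erase_addPivot : (addPivot hn σ hu).1.erase {(loose σ.1).min' hu.1} = σ.1 :=
  erase_insert (singleton_notMem_of_notMem_sup hu.2)

lemma height_addPivot : height (addPivot hn σ hu).1 = 2 * ((loose σ.1).min' hu.1 : ℕ) := by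
  have h : (loose (addPivot hn σ hu).1).Nonempty := loose_addPivot hn σ hu ▸ hu.1
  have hmin := min'_loose_addPivot hn σ hu h
  rw [height_of_singleton_mem h (hmin ▸ singleton_mem_addPivot hn σ hu), hmin]

lemma keyRank_addPivot :
    keyRank (addPivot hn σ hu).1 {(loose σ.1).min' hu.1} = numLarge σ.1 := by
  rw [keyRank_singleton_eq_numLarge (fun x hx => ((addPivot hn σ hu).2.1.1 x hx).1)]
  · rw [addPivot, numLarge, numLarge, filter_insert, if_neg (by simp)]
  · intro m' hm'
    rcases mem_insert.1 hm' with h | h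
    · exact (singleton_inj.1 h).ge
    · exact min'_le _ _ (mem_loose.2 (Or.inl h))

end AddPivot

open scoped Classical in
/-- The sign makes `σ` appear with coefficient `1` in the boundary of `gradient σ`. -/
noncomputable def gradient (hn : 2 ≤ n) (d : ℕ) : Cc n d →ₗ[ℤ] Cc n (d + 1) :=
  Finsupp.lift _ ℤ _ fun σ =>
    if hu : IsUp σ.1 then (-1 : ℤ) ^ numLarge σ.1 • Finsupp.single (addPivot hn σ hu) 1
    else 0

lemma gradient_single_of_isUp (hn : 2 ≤ n) {d : ℕ} (σ : Faces n d) (hu : IsUp σ.1) :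
    gradient hn d (Finsupp.single σ 1)
      = (-1 : ℤ) ^ numLarge σ.1 • Finsupp.single (addPivot hn σ hu) 1 := by
  classical
  rw [gradient, Finsupp.lift_apply, Finsupp.sum_single_index (by simp), one_smul, dif_pos hu]

lemma gradient_single_of_not_isUp (hn : 2 ≤ n) {d : ℕ} (σ : Faces n d) (hu : ¬ IsUp σ.1) :
    gradient hn d (Finsupp.single σ 1) = 0 := by
  classical
  rw [gradient, Finsupp.lift_apply, Finsupp.sum_single_index (by simp), one_smul, dif_neg hu]

lemma bdry_gradient_single (hn : 2 ≤ n) {d : ℕ} (σ : Faces n d) (hu : IsUp σ.1) :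
    bdry n d (gradient hn d (Finsupp.single σ 1))
      = Finsupp.single σ 1 + (-1 : ℤ) ^ numLarge σ.1 •
          ∑ b ∈ σ.1, (-1 : ℤ) ^ keyRank (addPivot hn σ hu).1 b •
            faceChain d ((addPivot hn σ hu).1.erase b) := by
  rw [gradient_single_of_isUp hn σ hu, map_smul, bdry_single,
    ← add_sum_erase _ _ (singleton_mem_addPivot hn σ hu), erase_addPivot, keyRank_addPivot,
    faceChain_val, smul_add, smul_smul, ← pow_add, Even.neg_one_pow ⟨_, rfl⟩, one_smul]

lemma keyRank_smul_gradient_erase_pivot (hn : 2 ≤ n) {d : ℕ} (σ : Faces n (d + 1))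
    (h : (loose σ.1).Nonempty) (hs : {(loose σ.1).min' h} ∈ σ.1) :
    (-1 : ℤ) ^ keyRank σ.1 {(loose σ.1).min' h} •
        gradient hn d (faceChain d (σ.1.erase {(loose σ.1).min' h}))
      = Finsupp.single σ 1 := by
  set m := (loose σ.1).min' h
  set ρ := eraseBlock σ hs
  have hloose : loose ρ.1 = loose σ.1 := by
    rw [eraseBlock_val, loose_erase σ.2.1 hs, union_eq_left, singleton_subset_iff]
    exact min'_mem _ h
  have hmin : ∀ h', (loose ρ.1).min' h' = m := fun _ => by simp only [hloose, m]
  have hu : IsUp ρ.1 := ⟨hloose ▸ h, by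
    rw [hmin, eraseBlock_val, mem_sup_erase σ.2.1 hs]; exact fun h => h.2 (mem_singleton_self m)⟩
  have hpartner : addPivot hn ρ hu = σ := Subtype.ext <| by
    rw [addPivot]; simp only [hmin]; exact insert_erase hs
  have hrank : keyRank σ.1 {m} = numLarge ρ.1 := by
    rw [keyRank_singleton_eq_numLarge (fun x hx => (σ.2.1.1 x hx).1)
      (fun m' hm' => min'_le _ _ (mem_loose.2 (Or.inl hm'))), eraseBlock_val, numLarge, numLarge,
      filter_erase, erase_eq_of_notMem (by simp)]
  rw [faceChain_erase σ hs, gradient_single_of_isUp hn ρ hu, hpartner, smul_smul, hrank,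
    ← pow_add, Even.neg_one_pow ⟨_, rfl⟩, one_smul]

end Matching

section Flow

def critical (d : ℕ) : Set (Faces n d) := {τ | loose τ.1 = ∅}

noncomputable def noncritical (d : ℕ) : Submodule ℤ (Cc n d) :=
  Finsupp.supported ℤ ℤ (critical d)ᶜ

noncomputable def noncriticalBelow (d k : ℕ) : Submodule ℤ (Cc n d) :=
  Finsupp.supported ℤ ℤ ((critical d)ᶜ ∩ {τ | height τ.1 < k})

lemma single_mem_noncriticalBelow {d k : ℕ} {τ : Faces n d} (hτ : (loose τ.1).Nonempty)
    (hk : height τ.1 < k) : Finsupp.single τ 1 ∈ noncriticalBelow d k :=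
  Finsupp.single_mem_supported ℤ 1 ⟨hτ.ne_empty, hk⟩

lemma noncriticalBelow_mono {d k k' : ℕ} (h : k ≤ k') :
    noncriticalBelow (n := n) d k ≤ noncriticalBelow d k' :=
  Finsupp.supported_mono (Set.inter_subset_inter_right _ fun _ hτ => lt_of_lt_of_le hτ h)

lemma noncriticalBelow_le_noncritical (d k : ℕ) :
    noncriticalBelow (n := n) d k ≤ noncritical d :=
  Finsupp.supported_mono Set.inter_subset_left

lemma noncriticalBelow_zero (d : ℕ) : noncriticalBelow (n := n) d 0 = ⊥ := by
  simp only [noncriticalBelow, Nat.not_lt_zero, Set.ofPred_false, Set.inter_empty,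
    Finsupp.supported_empty]

lemma noncritical_le_noncriticalBelow (d : ℕ) :
    noncritical (n := n) d ≤ noncriticalBelow d (2 * n + 1) :=
  Finsupp.supported_mono fun τ hτ => ⟨hτ, height_lt τ.1⟩

noncomputable def flow (hn : 2 ≤ n) : ∀ d, Cc n d →ₗ[ℤ] Cc n d
  | 0 => LinearMap.id - bdry n 0 ∘ₗ gradient hn 0
  | d + 1 =>
    LinearMap.id - bdry n (d + 1) ∘ₗ gradient hn (d + 1) - gradient hn d ∘ₗ bdry n d

variable (hn : 2 ≤ n)

lemma flow_zero_apply (x : Cc n 0) : flow hn 0 x = x - bdry n 0 (gradient hn 0 x) :=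
  rfl

lemma flow_succ_apply {d : ℕ} (x : Cc n (d + 1)) :
    flow hn (d + 1) x = x - bdry n (d + 1) (gradient hn (d + 1) x) - gradient hn d (bdry n d x) :=
  rfl

lemma gradient_single_mem_noncriticalBelow {d k : ℕ} (τ : Faces n d)
    (hk : ∀ hu : IsUp τ.1, 2 * ((loose τ.1).min' hu.1 : ℕ) < k) :
    gradient hn d (Finsupp.single τ 1) ∈ noncriticalBelow (d + 1) k := by
  by_cases hu : IsUp τ.1
  · rw [gradient_single_of_isUp hn τ hu]
    exact Submodule.smul_mem _ _ (single_mem_noncriticalBelow (loose_addPivot hn τ hu ▸ hu.1)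
      (height_addPivot hn τ hu ▸ hk hu))
  · rw [gradient_single_of_not_isUp hn τ hu]
    exact zero_mem _

lemma gradient_faceChain_erase_mem {d k : ℕ} (σ : Faces n (d + 1)) {b : Finset (Fin n)}
    (hb : b ∈ σ.1)
    (hk : ∀ hu : IsUp (σ.1.erase b), 2 * ((loose (σ.1.erase b)).min' hu.1 : ℕ) < k) :
    gradient hn d (faceChain d (σ.1.erase b)) ∈ noncriticalBelow (d + 1) k := by
  rw [faceChain_erase σ hb]
  exact gradient_single_mem_noncriticalBelow hn _ hk

lemma gradient_bdry_single {d : ℕ} (σ : Faces n (d + 1)) :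
    gradient hn d (bdry n d (Finsupp.single σ 1))
      = ∑ b ∈ σ.1,
          (-1 : ℤ) ^ keyRank σ.1 b • gradient hn d (faceChain d (σ.1.erase b)) := by
  rw [bdry_single, map_sum]
  exact sum_congr rfl fun b _ => map_smul _ _ _

lemma faceChain_erase_addPivot_mem {d : ℕ} (σ : Faces n d) (hu : IsUp σ.1) {b : Finset (Fin n)}
    (hb : b ∈ σ.1) :
    faceChain d ((addPivot hn σ hu).1.erase b) ∈ noncriticalBelow d (height σ.1) := by
  set m := (loose σ.1).min' hu.1
  have hbτ : b ∈ (addPivot hn σ hu).1 := mem_insert_of_mem hb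
  have hmem : {m} ∈ (addPivot hn σ hu).1.erase b :=
    mem_erase.2 ⟨fun h => singleton_notMem_of_notMem_sup hu.2 (h ▸ hb),
      singleton_mem_addPivot hn σ hu⟩
  have hne : (loose ((addPivot hn σ hu).1.erase b)).Nonempty := ⟨m, mem_loose.2 (Or.inl hmem)⟩
  have hle : (loose _).min' hne ≤ m := min'_le _ _ (mem_loose.2 (Or.inl hmem))
  rw [faceChain_erase _ hbτ]
  refine single_mem_noncriticalBelow hne ?_
  rw [eraseBlock_val, height_of_isUp hu]
  rcases hle.lt_or_eq with hlt | heq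
  · have := height_le hne
    have : ((loose _).min' hne : ℕ) < m := hlt
    omega
  · rw [height_of_singleton_mem hne (heq ▸ hmem), heq]
    omega

lemma flow_single_mem_of_isUp {d : ℕ} (σ : Faces n d) (hu : IsUp σ.1) :
    flow hn d (Finsupp.single σ 1) ∈ noncriticalBelow d (height σ.1) := by
  cases d with
  | zero =>
    have hσ : σ.1 = ∅ := card_eq_zero.1 σ.2.2
    simp [flow_zero_apply, bdry_gradient_single hn σ hu, hσ]
  | succ d =>
    have hV : gradient hn d (bdry n d (Finsupp.single σ 1))
        ∈ noncriticalBelow (d + 1) (height σ.1) := by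
      rw [gradient_bdry_single]
      refine sum_mem fun b hb => Submodule.smul_mem _ _ ?_
      refine gradient_faceChain_erase_mem hn σ hb fun hu' => ?_
      have : (loose (σ.1.erase b)).min' hu'.1 ≤ (loose σ.1).min' hu.1 :=
        min'_le _ _ (loose_erase σ.2.1 hb ▸ mem_union_left _ (min'_mem _ _))
      rw [height_of_isUp hu]
      exact Nat.lt_succ_of_le (Nat.mul_le_mul_left 2 this)
    have hflow : flow hn (d + 1) (Finsupp.single σ 1)
        = -((-1 : ℤ) ^ numLarge σ.1 •
            ∑ b ∈ σ.1, (-1 : ℤ) ^ keyRank (addPivot hn σ hu).1 b •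
              faceChain (d + 1) ((addPivot hn σ hu).1.erase b))
          - gradient hn d (bdry n d (Finsupp.single σ 1)) := by
      rw [flow_succ_apply, bdry_gradient_single hn σ hu]
      abel
    rw [hflow]
    refine sub_mem (neg_mem (Submodule.smul_mem _ _ (sum_mem fun b hb => ?_))) hV
    exact Submodule.smul_mem _ _ (faceChain_erase_addPivot_mem hn σ hu hb)

lemma flow_single_mem_of_not_isUp {d : ℕ} (σ : Faces n d) (h : (loose σ.1).Nonempty)
    (hu : ¬ IsUp σ.1) : flow hn d (Finsupp.single σ 1) ∈ noncriticalBelow d (height σ.1) := by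
  cases d with
  | zero =>
    refine absurd ⟨h, ?_⟩ hu
    simp [card_eq_zero.1 σ.2.2]
  | succ d =>
    set m := (loose σ.1).min' h
    have hs : {m} ∈ σ.1 := singleton_min'_mem_of_not_isUp h hu
    have hflow : flow hn (d + 1) (Finsupp.single σ 1)
        = -∑ b ∈ σ.1.erase {m},
            (-1 : ℤ) ^ keyRank σ.1 b • gradient hn d (faceChain d (σ.1.erase b)) := by
      rw [flow_succ_apply, gradient_single_of_not_isUp hn σ hu, map_zero, gradient_bdry_single,
        ← add_sum_erase _ _ hs, keyRank_smul_gradient_erase_pivot hn σ h hs]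
      abel
    rw [hflow]
    refine neg_mem (sum_mem fun b hb => Submodule.smul_mem _ _ ?_)
    obtain ⟨hbm, hb⟩ := mem_erase.1 hb
    have hmem : {m} ∈ σ.1.erase b := mem_erase.2 ⟨Ne.symm hbm, hs⟩
    refine gradient_faceChain_erase_mem hn σ hb fun hu' => ?_
    have hle : (loose (σ.1.erase b)).min' hu'.1 ≤ m := min'_le _ _ (mem_loose.2 (Or.inl hmem))
    -- the least loose vertex of `σ \ b` is uncovered, while `m` is covered by `{m}`
    have hne : (loose (σ.1.erase b)).min' hu'.1 ≠ m := fun heq =>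
      hu'.2 (heq ▸ mem_sup.2 ⟨_, hmem, mem_singleton_self m⟩)
    have hlt : ((loose (σ.1.erase b)).min' hu'.1 : ℕ) < m :=
      Fin.lt_def.1 (lt_of_le_of_ne hle hne)
    rw [height_of_singleton_mem h hs]
    omega

lemma flow_mem_noncriticalBelow {d k : ℕ} {x : Cc n d} (hx : x ∈ noncriticalBelow d (k + 1)) :
    flow hn d x ∈ noncriticalBelow d k := by
  rw [noncriticalBelow, Finsupp.supported_eq_span_single] at hx
  refine (Submodule.span_le (p := (noncriticalBelow d k).comap (flow hn d))).2 ?_ hx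
  rintro _ ⟨τ, ⟨hτ, hk⟩, rfl⟩
  have h : (loose τ.1).Nonempty := nonempty_iff_ne_empty.2 hτ
  refine noncriticalBelow_mono (Nat.le_of_lt_succ hk) ?_
  by_cases hu : IsUp τ.1
  · exact flow_single_mem_of_isUp hn τ hu
  · exact flow_single_mem_of_not_isUp hn τ h hu

end Flow

section Homology

noncomputable def cycles : ∀ d, Submodule ℤ (Cc n d)
  | 0 => ⊤
  | d + 1 => LinearMap.ker (bdry n d)

lemma bdry_mem_cycles (d : ℕ) (x : Cc n (d + 1)) : bdry n d x ∈ cycles d := by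
  cases d with
  | zero => trivial
  | succ d => exact bdry_bdry d x

lemma bdry_mem_noncritical (d : ℕ) (x : Cc n (d + 1)) : bdry n d x ∈ noncritical d := by
  induction x using Finsupp.induction_linear with
  | zero => simp
  | add x y hx hy => simpa using add_mem hx hy
  | single σ r =>
    rw [← mul_one r, ← smul_eq_mul, ← Finsupp.smul_single, map_smul, bdry_single]
    refine Submodule.smul_mem _ _ (sum_mem fun b hb => Submodule.smul_mem _ _ ?_)
    obtain ⟨m, hm⟩ := (σ.2.1.1 b hb).1
    rw [faceChain_erase σ hb]
    refine Finsupp.single_mem_supported ℤ 1 (ne_empty_of_mem (a := m) ?_)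
    rw [eraseBlock_val, loose_erase σ.2.1 hb]
    exact mem_union_right _ hm

lemma gradient_mem_noncritical (hn : 2 ≤ n) {d : ℕ} (x : Cc n d) :
    gradient hn d x ∈ noncritical (d + 1) := by
  induction x using Finsupp.induction_linear with
  | zero => simp
  | add x y hx hy => simpa using add_mem hx hy
  | single σ r =>
    rw [← mul_one r, ← smul_eq_mul, ← Finsupp.smul_single, map_smul]
    refine Submodule.smul_mem _ _ (noncriticalBelow_le_noncritical _ (2 * n)
      (gradient_single_mem_noncriticalBelow hn σ fun hu => ?_))
    have := ((loose σ.1).min' hu.1).isLt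
    omega

lemma flow_of_mem_cycles (hn : 2 ≤ n) {d : ℕ} {z : Cc n d} (hz : z ∈ cycles d) :
    flow hn d z = z - bdry n d (gradient hn d z) := by
  cases d with
  | zero => rfl
  | succ d => rw [flow_succ_apply, LinearMap.mem_ker.1 hz, map_zero, sub_zero]

theorem exists_mem_noncritical_bdry_eq (hn : 2 ≤ n) {d : ℕ} {z : Cc n d}
    (hz : z ∈ noncritical d) (hc : z ∈ cycles d) :
    ∃ w ∈ noncritical (d + 1), bdry n d w = z := by
  suffices ∀ k, ∀ z ∈ noncriticalBelow d k, z ∈ cycles d →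
      ∃ w ∈ noncritical (d + 1), bdry n d w = z from
    this _ z (noncritical_le_noncriticalBelow d hz) hc
  intro k
  induction k with
  | zero =>
    intro z hz _
    rw [noncriticalBelow_zero, Submodule.mem_bot] at hz
    exact ⟨0, zero_mem _, by rw [map_zero, hz]⟩
  | succ k ih =>
    intro z hz hc
    have hlower := flow_mem_noncriticalBelow hn hz
    rw [flow_of_mem_cycles hn hc] at hlower
    obtain ⟨w, hw, hbw⟩ := ih _ hlower (sub_mem hc (bdry_mem_cycles d _))
    exact ⟨gradient hn d z + w, add_mem (gradient_mem_noncritical hn z) hw,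
      by rw [map_add, hbw, add_sub_cancel]⟩

noncomputable def criticalProj (d : ℕ) : Cc n d →ₗ[ℤ] critical (n := n) d →₀ ℤ :=
  Finsupp.lsubtypeDomain (critical d)

lemma criticalProj_eq_zero_iff {d : ℕ} {x : Cc n d} :
    criticalProj d x = 0 ↔ x ∈ noncritical d := by
  rw [criticalProj, Finsupp.lsubtypeDomain_apply, Finsupp.subtypeDomain_eq_zero_iff', noncritical,
    Finsupp.mem_supported']
  simp only [Set.notMem_compl_iff]

lemma criticalProj_cycles_surjective (hn : 2 ≤ n) (q : ℕ) :
    Function.Surjective (criticalProj (q + 1) ∘ₗ (LinearMap.ker (bdry n q)).subtype) := by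
  classical
  intro y
  set c : Cc n (q + 1) := y.extendDomain
  obtain ⟨w, hw, hbw⟩ :=
    exists_mem_noncritical_bdry_eq hn (bdry_mem_noncritical q c) (bdry_mem_cycles q c)
  refine ⟨⟨c - w, by rw [LinearMap.mem_ker, map_sub, hbw, sub_self]⟩, ?_⟩
  rw [LinearMap.comp_apply, Submodule.subtype_apply, map_sub, criticalProj_eq_zero_iff.2 hw,
    sub_zero]
  exact Finsupp.subtypeDomain_extendDomain y

lemma ker_criticalProj_cycles (hn : 2 ≤ n) (q : ℕ) :
    LinearMap.ker (criticalProj (q + 1) ∘ₗ (LinearMap.ker (bdry n q)).subtype)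
      = (LinearMap.range (bdry n (q + 1))).comap (LinearMap.ker (bdry n q)).subtype := by
  ext ⟨z, hz⟩
  rw [LinearMap.mem_ker, LinearMap.comp_apply, Submodule.subtype_apply, criticalProj_eq_zero_iff,
    Submodule.mem_comap, Submodule.subtype_apply, LinearMap.mem_range]
  constructor
  · intro hnc
    obtain ⟨w, -, hw⟩ := exists_mem_noncritical_bdry_eq hn hnc hz
    exact ⟨w, hw⟩
  · rintro ⟨w, rfl⟩
    exact bdry_mem_noncritical _ w

noncomputable def hredEquivCritical (hn : 2 ≤ n) (q : ℕ) :
    Hred n q ≃ₗ[ℤ] critical (n := n) (q + 1) →₀ ℤ :=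
  (Submodule.quotEquivOfEq _ _ (ker_criticalProj_cycles hn q).symm).trans
    (LinearMap.quotKerEquivOfSurjective _ (criticalProj_cycles_surjective hn q))

lemma loose_eq_empty_iff {σ : Finset (Finset (Fin n))} (hf : IsFace n σ) :
    loose σ = ∅ ↔ (∀ x ∈ σ, 2 ≤ #x) ∧ σ.sup id = univ := by
  simp only [eq_empty_iff_forall_notMem, mem_loose, not_or, not_not, forall_and,
    eq_univ_iff_forall]
  refine and_congr_left' ⟨fun h x hx => ?_, fun h m hm => by simpa using h _ hm⟩
  obtain ⟨m, rfl⟩ | hnt := (hf.1 x hx).1.exists_eq_singleton_or_nontrivial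
  · exact absurd hx (h m)
  · exact one_lt_card_iff_nontrivial.2 hnt

lemma card_critical (q : ℕ) : Nat.card (critical (n := n) (q + 1)) = betaP n q := by
  refine Nat.card_congr ((Equiv.subtypeSubtypeEquivSubtypeInter
    (fun σ => IsFace n σ ∧ #σ = q + 1) (fun σ => loose σ = ∅)).trans
    (Equiv.subtypeEquivRight fun σ => ?_))
  constructor
  · rintro ⟨⟨hf, hcard⟩, hloose⟩
    obtain ⟨hlarge, hcov⟩ := (loose_eq_empty_iff hf).1 hloose
    exact ⟨hcard, fun x hx => ⟨hlarge x hx, (hf.1 x hx).2⟩, hf.2, hcov⟩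
  · rintro ⟨hcard, hblocks, hdisj, hcov⟩
    have hf : IsFace n σ := ⟨fun x hx => ⟨card_pos.1 (by have := (hblocks x hx).1; omega),
      (hblocks x hx).2⟩, hdisj⟩
    exact ⟨⟨hf, hcard⟩, (loose_eq_empty_iff hf).2 ⟨fun x hx => (hblocks x hx).1, hcov⟩⟩

end Homology

end DisjointSubsetsComplex

theorem stmt7_general (n q : ℕ) (hn : 2 ≤ n) :
    Nonempty (Hred n q ≃ₗ[ℤ] (Fin (betaP n q) →₀ ℤ)) :=
  ⟨(DisjointSubsetsComplex.hredEquivCritical hn q).trans (Finsupp.domLCongr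
    ((Finite.equivFin _).trans (finCongr (DisjointSubsetsComplex.card_critical q))))⟩

/-- For `n ≥ 2` and `0 ≤ q ≤ n-1`, the `q`-th reduced integral homology of `X(n)` is
free abelian of rank `β(n,q)`. -/
theorem stmt7 (n q : ℕ) (hn : 2 ≤ n) (hq : q ≤ n - 1) :
    Nonempty (Hred n q ≃ₗ[ℤ] (Fin (betaP n q) →₀ ℤ)) :=
  stmt7_general n q hn
end

section
/- If λ is a partition of n with all parts distinct, then the normalizer in S_n of the standard Young subgroup S_λ is S_λ itself. -/
/-- The subgroup of `S_n` preserving each fibre of a block-labelling `B : Fin n → ℕ`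
(a Young subgroup when `B` labels consecutive blocks). -/
def Young (n : ℕ) (B : Fin n → ℕ) : Subgroup (Equiv.Perm (Fin n)) where
  carrier := {g | ∀ x, B (g x) = B x}
  one_mem' := fun _ => rfl
  mul_mem' := by
    intro a b ha hb x
    simpa [Equiv.Perm.mul_apply, hb x] using ha (b x)
  inv_mem' := by
    intro a ha x
    simpa using (ha (a⁻¹ x)).symm

/-- `blockIdx n l x`: the index of the consecutive block (of sizes `l`) containing `x`. -/
def blockIdx (n : ℕ) (l : List ℕ) (x : Fin n) : ℕ :=
  (List.range l.length).countP fun j => decide ((l.take (j + 1)).sum ≤ x.1)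

/-! An element `g` of the normaliser sends the transposition of two points of one block to the
transposition of their images, which again lies in the Young subgroup; so `g` maps blocks onto
blocks, and in particular onto blocks of the same size. When the block sizes are distinct, `g`
must therefore fix every block. -/

open Finset

section Normalizer

variable {n : ℕ} {B : Fin n → ℕ}

theorem swap_mem_young {x y : Fin n} (h : B x = B y) : Equiv.swap x y ∈ Young n B := by
  intro z
  rcases eq_or_ne z x with rfl | hzx
  · rw [Equiv.swap_apply_left, h]
  rcases eq_or_ne z y with rfl | hzy
  · rw [Equiv.swap_apply_right, h]
  · rw [Equiv.swap_apply_of_ne_of_ne hzx hzy]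

theorem apply_eq_apply_of_mem_normalizer_young {g : Equiv.Perm (Fin n)}
    (hg : g ∈ Subgroup.normalizer (Young n B : Set (Equiv.Perm (Fin n)))) {x y : Fin n}
    (h : B x = B y) : B (g x) = B (g y) := by
  have hconj : Equiv.swap (g x) (g y) ∈ Young n B := by
    rw [Equiv.swap_apply_apply]
    exact (Subgroup.mem_normalizer_iff.mp hg _).mp (swap_mem_young h)
  simpa using (hconj (g x)).symm

theorem apply_eq_apply_iff_of_mem_normalizer_young {g : Equiv.Perm (Fin n)}
    (hg : g ∈ Subgroup.normalizer (Young n B : Set (Equiv.Perm (Fin n)))) {x y : Fin n} :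
    B (g x) = B (g y) ↔ B x = B y := by
  refine ⟨fun h => ?_, apply_eq_apply_of_mem_normalizer_young hg⟩
  simpa using apply_eq_apply_of_mem_normalizer_young (Subgroup.inv_mem _ hg) h

theorem card_fiber_apply_of_mem_normalizer_young {g : Equiv.Perm (Fin n)}
    (hg : g ∈ Subgroup.normalizer (Young n B : Set (Equiv.Perm (Fin n)))) (x : Fin n) :
    #{y | B y = B (g x)} = #{y | B y = B x} :=
  calc #{y | B y = B (g x)} = #{y | B (g y) = B (g x)} := (card_equiv g (by simp)).symm
    _ = #{y | B y = B x} := by simp only [apply_eq_apply_iff_of_mem_normalizer_young hg]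

theorem normalizer_young_eq_of_card_fiber_injective
    (hB : ∀ x y, #{z | B z = B x} = #{z | B z = B y} → B x = B y) :
    Subgroup.normalizer (Young n B : Set (Equiv.Perm (Fin n))) = Young n B :=
  le_antisymm (fun _ hg x => hB _ _ (card_fiber_apply_of_mem_normalizer_young hg x))
    Subgroup.le_normalizer

end Normalizer

section BlockIdx

theorem List.countP_range_lt {m i : ℕ} (h : i ≤ m) :
    (List.range m).countP (fun j => decide (j < i)) = i := by
  obtain ⟨k, rfl⟩ := Nat.exists_eq_add_of_le h
  rw [List.range_add, List.countP_append, List.countP_eq_length.2 (by simp),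
    List.countP_eq_zero.2 (by simp)]
  simp

theorem List.sum_take_le_sum_take (l : List ℕ) {a b : ℕ} (h : a ≤ b) :
    (l.take a).sum ≤ (l.take b).sum :=
  (List.take_prefix_take_left h).sublist.sum_le_sum (by simp)

theorem List.exists_sum_take_le_lt_sum_take (l : List ℕ) {x : ℕ} (hx : x < l.sum) :
    ∃ i < l.length, (l.take i).sum ≤ x ∧ x < (l.take (i + 1)).sum := by
  induction l generalizing x with
  | nil => simp at hx
  | cons a t ih =>
    rcases Nat.lt_or_ge x a with h | h
    · exact ⟨0, by simp, by simp, by simpa using h⟩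
    · obtain ⟨i, hi, h1, h2⟩ := ih (x := x - a) (by simp at hx; omega)
      refine ⟨i + 1, by simpa using hi, ?_, ?_⟩ <;>
        simp only [List.take_succ_cons, List.sum_cons] <;> omega

theorem Fin.card_filter_le_val_lt {n a b : ℕ} (hb : b ≤ n) :
    #{x : Fin n | a ≤ x.1 ∧ x.1 < b} = b - a := by
  rw [← card_map Fin.valEmbedding, ← Nat.card_Ico]
  congr 1; ext k
  simp only [mem_map, mem_filter, mem_univ, true_and, Fin.valEmbedding_apply, mem_Ico]
  exact ⟨by rintro ⟨x, hx, rfl⟩; exact hx, fun hk => ⟨⟨k, by omega⟩, hk, rfl⟩⟩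

variable {n : ℕ} {l : List ℕ}

theorem blockIdx_eq_of_sum_take_le_lt {x : Fin n} {i : ℕ} (hi : i < l.length)
    (h1 : (l.take i).sum ≤ x.1) (h2 : x.1 < (l.take (i + 1)).sum) : blockIdx n l x = i := by
  have hcongr : ∀ j ∈ List.range l.length,
      decide ((l.take (j + 1)).sum ≤ x.1) = true ↔ decide (j < i) = true := by
    intro j _
    simp only [decide_eq_true_eq]
    rcases Nat.lt_or_ge j i with hj | hj
    · exact iff_of_true ((l.sum_take_le_sum_take hj).trans h1) hj
    · have : (l.take (i + 1)).sum ≤ (l.take (j + 1)).sum := l.sum_take_le_sum_take (by omega)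
      exact iff_of_false (by omega) (by omega)
  rw [blockIdx, List.countP_congr hcongr, List.countP_range_lt hi.le]

theorem blockIdx_lt_length_and_sum_take_le_lt (hsum : l.sum = n) (x : Fin n) :
    blockIdx n l x < l.length ∧ (l.take (blockIdx n l x)).sum ≤ x.1 ∧
      x.1 < (l.take (blockIdx n l x + 1)).sum := by
  obtain ⟨i, hi, h1, h2⟩ := l.exists_sum_take_le_lt_sum_take (x := x.1) (by omega)
  rw [blockIdx_eq_of_sum_take_le_lt hi h1 h2]
  exact ⟨hi, h1, h2⟩

theorem card_blockIdx_eq (hsum : l.sum = n) {i : ℕ} (hi : i < l.length) :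
    #{x : Fin n | blockIdx n l x = i} = l[i] := by
  have hfiber : ∀ x : Fin n,
      blockIdx n l x = i ↔ (l.take i).sum ≤ x.1 ∧ x.1 < (l.take (i + 1)).sum := by
    refine fun x => ⟨fun hx => ?_, fun h => blockIdx_eq_of_sum_take_le_lt hi h.1 h.2⟩
    obtain ⟨-, h1, h2⟩ := blockIdx_lt_length_and_sum_take_le_lt hsum x
    rw [hx] at h1 h2
    exact ⟨h1, h2⟩
  have hle : (l.take (i + 1)).sum ≤ n := by
    simpa [hsum] using l.sum_take_le_sum_take (b := l.length) (Nat.succ_le_of_lt hi)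
  simp only [hfiber]
  rw [Fin.card_filter_le_val_lt hle, List.sum_take_succ l i hi, Nat.add_sub_cancel_left]

end BlockIdx

theorem stmt10_general (n : ℕ) (l : List ℕ) (hnodup : l.Nodup) (hsum : l.sum = n) :
    Subgroup.normalizer (Young n (blockIdx n l) : Set (Equiv.Perm (Fin n))) = Young n (blockIdx n l) := by
  refine normalizer_young_eq_of_card_fiber_injective fun x y hcard => ?_
  rw [card_blockIdx_eq hsum (blockIdx_lt_length_and_sum_take_le_lt hsum x).1,
    card_blockIdx_eq hsum (blockIdx_lt_length_and_sum_take_le_lt hsum y).1] at hcard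
  exact hnodup.getElem_inj_iff.mp hcard

/-- If `λ` is a partition of `n` with all parts distinct, then the normaliser in `S_n`
of the standard Young subgroup `S_λ` is `S_λ` itself. -/
theorem stmt10 (n : ℕ) (l : List ℕ) (hpos : ∀ p ∈ l, 1 ≤ p)
    (hsort : l.Pairwise (· ≥ ·)) (hnodup : l.Nodup) (hsum : l.sum = n) :
    Subgroup.normalizer (Young n (blockIdx n l) : Set (Equiv.Perm (Fin n))) = Young n (blockIdx n l) :=
  stmt10_general n l hnodup hsum
end

section
/- Let λ be a partition of n, N_λ the normalizer of S_λ in S_n, and V the one-dimensional sign-twisted ℚN_λ-module (g acts by sgn(ḡ) where ḡ ∈ N_λ/S_λ). The multiplicity of the trivial S_n-representation in Ind_{N_λ}^{S_n} V is 1 if λ has no repeated parts, and 0 otherwise. -/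
/-- The minimal set partition of `Fin n` of shape `l`: consecutive intervals. -/
def stdPart (n : ℕ) (l : List ℕ) : Finset (Finset (Fin n)) :=
  (List.range l.length).toFinset.image fun j =>
    Finset.univ.filter fun x => blockIdx n l x = j

/-- The blocks of `P` in canonical order. -/
noncomputable def sortedBlocks (n : ℕ) (P : Finset (Finset (Fin n))) :
    List (Finset (Fin n)) :=
  P.toList.mergeSort fun s t => decide (keyB n s ≤ keyB n t)

/-- Number of inversions of a list of naturals. -/
def invCount : List ℕ → ℕ
  | [] => 0
  | a :: t => (t.countP fun b => decide (b < a)) + invCount t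

/-- The sign `sgn(ḡ)` of the permutation of the blocks of `P` induced by `g`. -/
noncomputable def sgnP (n : ℕ) (g : Equiv.Perm (Fin n))
    (P : Finset (Finset (Fin n))) : ℤ :=
  (-1) ^ invCount ((sortedBlocks n P).map fun s => keyB n (s.image g))

/-- The subspace of `S_n`-invariant vectors of the induced module `Ind_{N_λ}^{S_n} V`
over `ℚ`, the latter realised as the functions `f : S_n → ℚ` with
`f(hx) = sgn(h̄)·f(x)` for `h ∈ N_λ`, with `S_n` acting by right translation.
Its dimension is the multiplicity of the trivial representation in `Ind_{N_λ}^{S_n} V`. -/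
noncomputable def InvInd (n : ℕ) (l : List ℕ) : Submodule ℚ (Equiv.Perm (Fin n) → ℚ) where
  carrier := {f | (∀ h ∈ Subgroup.normalizer (Young n (blockIdx n l) : Set (Equiv.Perm (Fin n))), ∀ x,
      f (h * x) = (sgnP n h (stdPart n l) : ℚ) * f x) ∧
    ∀ g x, f (x * g) = f x}
  add_mem' := by
    intro f g hf hg
    refine ⟨fun h hh x => ?_, fun g' x => ?_⟩
    · simp only [Pi.add_apply, hf.1 h hh x, hg.1 h hh x]; ring
    · simp only [Pi.add_apply, hf.2 g' x, hg.2 g' x]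
  zero_mem' := by
    constructor <;> intros <;> simp
  smul_mem' := by
    intro c f hf
    refine ⟨fun h hh x => ?_, fun g' x => ?_⟩
    · simp only [Pi.smul_apply, smul_eq_mul, hf.1 h hh x]; ring
    · simp only [Pi.smul_apply, hf.2 g' x]

/-!
Right invariance makes an invariant vector `f` of the induced module constant, and then
`f = sgn(h̄) • f` for `h ∈ N_λ`; so the multiplicity is `1` if `sgn` is trivial on `N_λ` and `0`
otherwise. The sign is read off the canonical order of the blocks, which ranks them by decreasing
size and then by position. If the parts of `λ` are distinct, any permutation keeps the sizes, hence
the order, of the blocks, and has sign `1`. Otherwise the sorted `λ` has two equal consecutive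
parts; exchanging the two corresponding adjacent intervals normalizes `S_λ` and transposes two
blocks that are neighbours in the canonical order, which gives sign `-1`.
-/

open Finset

section KeyB

variable {n : ℕ}

lemma sum_two_pow_val_eq (s : Finset (Fin n)) :
    ∑ i ∈ s, 2 ^ (i : ℕ) = ∑ i ∈ s.map Fin.valEmbedding, 2 ^ i :=
  (sum_map s Fin.valEmbedding _).symm

lemma sum_two_pow_val_lt_two_pow {s : Finset (Fin n)} {m : ℕ} (h : ∀ x ∈ s, (x : ℕ) < m) :
    ∑ i ∈ s, 2 ^ (i : ℕ) < 2 ^ m := by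
  rw [sum_two_pow_val_eq]
  exact Nat.geomSum_lt le_rfl (by simpa using h)

lemma keyB_lt_of_card_lt {s t : Finset (Fin n)} (h : t.card < s.card) : keyB n s < keyB n t := by
  have hsum : ∑ i ∈ s, 2 ^ (i : ℕ) < 4 ^ n :=
    (sum_two_pow_val_lt_two_pow fun x _ => x.isLt).trans_le
      (Nat.pow_le_pow_left (by norm_num) n)
  have hcard : n - s.card + 1 ≤ n - t.card := by
    have := card_le_univ s
    rw [Fintype.card_fin] at this
    omega
  unfold keyB
  calc (n - s.card) * 4 ^ n + ∑ i ∈ s, 2 ^ (i : ℕ)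
      < (n - s.card + 1) * 4 ^ n := by rw [add_one_mul]; omega
    _ ≤ (n - t.card) * 4 ^ n := Nat.mul_le_mul_right _ hcard
    _ ≤ (n - t.card) * 4 ^ n + ∑ i ∈ t, 2 ^ (i : ℕ) := Nat.le_add_right _ _

lemma card_le_of_keyB_le {s t : Finset (Fin n)} (h : keyB n s ≤ keyB n t) :
    t.card ≤ s.card :=
  not_lt.1 fun hlt => (keyB_lt_of_card_lt hlt).not_ge h

lemma keyB_injective : Function.Injective (keyB n) := by
  intro s t h
  have hcard : s.card = t.card := (card_le_of_keyB_le h.ge).antisymm (card_le_of_keyB_le h.le)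
  unfold keyB at h
  rw [hcard, sum_two_pow_val_eq, sum_two_pow_val_eq] at h
  exact map_injective _ (geomSum_injective le_rfl (Nat.add_left_cancel h))

lemma keyB_lt_of_card_eq {s t : Finset (Fin n)} (hcard : s.card = t.card)
    (hlt : ∀ x ∈ s, ∀ y ∈ t, x < y) (ht : t.Nonempty) : keyB n s < keyB n t := by
  obtain ⟨y, hy⟩ := ht
  have hsum : ∑ i ∈ s, 2 ^ (i : ℕ) < ∑ i ∈ t, 2 ^ (i : ℕ) :=
    calc ∑ i ∈ s, 2 ^ (i : ℕ) < 2 ^ (y : ℕ) :=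
          sum_two_pow_val_lt_two_pow fun x hx => hlt x hx y hy
      _ ≤ ∑ i ∈ t, 2 ^ (i : ℕ) := single_le_sum (f := fun i : Fin n => 2 ^ (i : ℕ))
          (fun _ _ => Nat.zero_le _) hy
  unfold keyB
  rw [hcard]
  omega

end KeyB

lemma invCount_eq_zero {L : List ℕ} (h : L.Pairwise (· ≤ ·)) : invCount L = 0 := by
  induction L with
  | nil => rfl
  | cons a t ih =>
    rw [List.pairwise_cons] at h
    rw [invCount, ih h.2, List.countP_eq_zero.2 fun b hb => by simpa using h.1 b hb]

lemma invCount_append_swap {x y : ℕ} (hxy : x < y) (A C : List ℕ) :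
    invCount (A ++ y :: x :: C) = invCount (A ++ x :: y :: C) + 1 := by
  induction A with
  | nil =>
    simp only [List.nil_append, invCount, List.countP_cons, hxy, hxy.not_gt, decide_true,
      decide_false, if_true, Bool.false_eq_true, if_false]
    omega
  | cons z A ih =>
    simp only [List.cons_append, invCount, ih,
      ((List.Perm.swap x y C).append_left A).countP_eq]
    omega

lemma List.exists_eq_append_cons_cons {α : Type*} {f : α → ℕ} {a b : α} :
    ∀ {L : List α}, L.Pairwise (fun s t => f s < f t) → a ∈ L → b ∈ L → f a < f b →
      (∀ c ∈ L, f a < f c → f b ≤ f c) → ∃ A C, L = A ++ a :: b :: C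
  | [], _, ha, _, _, _ => absurd ha List.not_mem_nil
  | c :: L, hL, ha, hb, hab, hcov => by
    rw [List.pairwise_cons] at hL
    by_cases hac : a = c
    · subst hac
      have hbL : b ∈ L := (List.mem_cons.1 hb).resolve_left (by rintro rfl; omega)
      obtain _ | ⟨d, L'⟩ := L
      · exact absurd hbL List.not_mem_nil
      by_cases hbd : b = d
      · exact ⟨[], L', by rw [hbd]; rfl⟩
      have hdb : f d < f b :=
        (List.pairwise_cons.1 hL.2).1 b ((List.mem_cons.1 hbL).resolve_left hbd)
      have := hcov d (by simp) (hL.1 d (by simp))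
      omega
    · have haL : a ∈ L := (List.mem_cons.1 ha).resolve_left hac
      have hbL : b ∈ L := (List.mem_cons.1 hb).resolve_left fun hbc => by
        have := hL.1 a haL
        rw [← hbc] at this
        omega
      obtain ⟨A, C, rfl⟩ := List.exists_eq_append_cons_cons hL.2 haL hbL hab
        fun c hc => hcov c (List.mem_cons_of_mem _ hc)
      exact ⟨c :: A, C, rfl⟩

section SortedBlocks

variable {n : ℕ}

lemma mem_sortedBlocks {P : Finset (Finset (Fin n))} {s : Finset (Fin n)} :
    s ∈ sortedBlocks n P ↔ s ∈ P := by
  rw [sortedBlocks, (List.mergeSort_perm P.toList _).mem_iff, mem_toList]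

lemma sortedBlocks_pairwise_lt (P : Finset (Finset (Fin n))) :
    (sortedBlocks n P).Pairwise fun s t => keyB n s < keyB n t := by
  have hle : (sortedBlocks n P).Pairwise fun s t => keyB n s ≤ keyB n t :=
    (List.pairwise_mergeSort (fun _ _ _ hab hbc => by simp only [decide_eq_true_eq] at *; omega)
      (fun _ _ => by simp only [Bool.or_eq_true, decide_eq_true_eq]; omega) P.toList).imp
      fun h => by simpa using h
  have hnodup : (sortedBlocks n P).Nodup :=
    (List.mergeSort_perm P.toList _).nodup_iff.2 (nodup_toList P)
  exact (hle.and hnodup).imp fun h => lt_of_le_of_ne h.1 (keyB_injective.ne h.2)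

lemma sgnP_eq_one {P : Finset (Finset (Fin n))}
    (hP : ∀ s ∈ P, ∀ t ∈ P, s.card = t.card → s = t) (g : Equiv.Perm (Fin n)) :
    sgnP n g P = 1 := by
  rw [sgnP, invCount_eq_zero, pow_zero]
  refine List.pairwise_map.2 ((sortedBlocks_pairwise_lt P).imp_of_mem fun hs ht hst => ?_)
  have hcard := (card_le_of_keyB_le hst.le).lt_of_ne fun h =>
    hst.ne (congrArg _ (hP _ (mem_sortedBlocks.1 hs) _ (mem_sortedBlocks.1 ht) h.symm))
  refine (keyB_lt_of_card_lt ?_).le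
  rwa [card_image_of_injective _ g.injective, card_image_of_injective _ g.injective]

lemma sgnP_eq_neg_one {P : Finset (Finset (Fin n))} {g : Equiv.Perm (Fin n)}
    {a b : Finset (Fin n)} (ha : a ∈ P) (hb : b ∈ P) (hab : keyB n a < keyB n b)
    (hcov : ∀ c ∈ P, keyB n a < keyB n c → keyB n b ≤ keyB n c)
    (hga : a.image g = b) (hgb : b.image g = a)
    (hfix : ∀ c ∈ P, c ≠ a → c ≠ b → c.image g = c) :
    sgnP n g P = -1 := by
  have hL := sortedBlocks_pairwise_lt P
  obtain ⟨A, C, hAC⟩ := List.exists_eq_append_cons_cons hL (mem_sortedBlocks.2 ha)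
    (mem_sortedBlocks.2 hb) hab fun c hc => hcov c (mem_sortedBlocks.1 hc)
  rw [hAC] at hL
  obtain ⟨-, hbC, hA⟩ := List.pairwise_append.1 hL
  obtain ⟨haC, hbC⟩ := List.pairwise_cons.1 hbC
  have hmemP : ∀ c, c ∈ A ∨ c ∈ C → c ∈ P := fun c hc =>
    mem_sortedBlocks.1 (by rw [hAC]; rcases hc with hc | hc <;> simp [hc])
  have hfixKey : ∀ c, c ∈ A ∨ c ∈ C → keyB n (c.image g) = keyB n c := by
    rintro c hc
    have hkey : keyB n c ≠ keyB n a ∧ keyB n c ≠ keyB n b := by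
      rcases hc with hc | hc
      · have h1 := hA c hc a (by simp)
        have h2 := hA c hc b (by simp)
        omega
      · have h1 := haC c (by simp [hc])
        have h2 := (List.pairwise_cons.1 hbC).1 c hc
        omega
    rw [hfix c (hmemP c hc) (fun h => hkey.1 (h ▸ rfl)) fun h => hkey.2 (h ▸ rfl)]
  -- `g` exchanges two neighbours of the sorted list of keys, creating exactly one inversion.
  have hmap : (sortedBlocks n P).map (fun s => keyB n (s.image g)) =
      A.map (keyB n) ++ keyB n b :: keyB n a :: C.map (keyB n) := by
    rw [hAC, List.map_append, List.map_cons, List.map_cons, hga, hgb,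
      List.map_congr_left fun c hc => hfixKey c (Or.inl hc),
      List.map_congr_left fun c hc => hfixKey c (Or.inr hc)]
  have hsorted :
      (A.map (keyB n) ++ keyB n a :: keyB n b :: C.map (keyB n)).Pairwise (· ≤ ·) := by
    have := List.pairwise_map.2 (hL.imp le_of_lt)
    simpa using this
  rw [sgnP, hmap, invCount_append_swap hab, invCount_eq_zero hsorted]
  norm_num

end SortedBlocks

lemma Nat.exists_mem_Ico_of_lt {S : ℕ → ℕ} {x : ℕ} (h0 : S 0 ≤ x) :
    ∀ {k : ℕ}, x < S k → ∃ i < k, S i ≤ x ∧ x < S (i + 1)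
  | 0, hk => absurd hk (not_lt.2 h0)
  | k + 1, hk => by
    by_cases hxk : x < S k
    · obtain ⟨i, hi, hx⟩ := Nat.exists_mem_Ico_of_lt h0 hxk
      exact ⟨i, by omega, hx⟩
    · exact ⟨k, by omega, not_lt.1 hxk, hk⟩

def intervalSwap (a m x : ℕ) : ℕ :=
  if x < a then x else if x < a + m then x + m else if x < a + 2 * m then x - m else x

lemma intervalSwap_involutive (a m : ℕ) : Function.Involutive (intervalSwap a m) := by
  intro x
  unfold intervalSwap
  split_ifs <;> omega

def intervalSwapPerm (n a m : ℕ) (h : a + 2 * m ≤ n) : Equiv.Perm (Fin n) :=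
  Function.Involutive.toPerm
    (fun x => ⟨intervalSwap a m x, by have := x.isLt; unfold intervalSwap; split_ifs <;> omega⟩)
    fun x => Fin.ext (intervalSwap_involutive a m x)

lemma List.sum_take_add_two_of_getElem_eq {l : List ℕ} {j : ℕ} (hj : j + 1 < l.length)
    (hjj : l[j] = l[j + 1]) : (l.take (j + 2)).sum = (l.take j).sum + 2 * l[j] := by
  rw [List.sum_take_succ _ _ hj, List.sum_take_succ _ _ (by omega), ← hjj]
  ring

lemma List.exists_getElem_eq_getElem_succ {l : List ℕ} (hsort : l.Pairwise (· ≥ ·))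
    (hnd : ¬ l.Nodup) : ∃ j, ∃ hj : j + 1 < l.length, l[j] = l[j + 1] := by
  by_contra! hne
  refine hnd ((List.isChain_iff_pairwise (R := (· > ·))).1 ?_).nodup
  exact List.isChain_iff_getElem.2 fun i hi =>
    (List.pairwise_iff_getElem.1 hsort i (i + 1) (by omega) hi (by omega)).lt_of_ne' (hne i hi)

section Blocks

variable {n : ℕ} {l : List ℕ}

def block (n : ℕ) (l : List ℕ) (i : ℕ) : Finset (Fin n) :=
  univ.filter fun x => blockIdx n l x = i

lemma mem_block {i : ℕ} {x : Fin n} : x ∈ block n l i ↔ blockIdx n l x = i := by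
  simp [block]

lemma mem_stdPart {s : Finset (Fin n)} :
    s ∈ stdPart n l ↔ ∃ i < l.length, block n l i = s := by
  simp [stdPart, block]

lemma blockIdx_mono {x y : Fin n} (h : x ≤ y) : blockIdx n l x ≤ blockIdx n l y :=
  List.countP_mono_left fun j _ hj => by
    simp only [decide_eq_true_eq] at hj ⊢
    exact hj.trans h

lemma blockIdx_eq_of_mem_Ico {x : Fin n} {i : ℕ} (hi : i < l.length)
    (h1 : (l.take i).sum ≤ x) (h2 : x < (l.take (i + 1)).sum) : blockIdx n l x = i := by
  have hS := List.monotone_sum_take l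
  change Nat.count _ _ = i
  rw [Nat.count_eq_card_filter_range, ← card_range i]
  congr 1
  ext j
  simp only [mem_filter, mem_range]
  constructor
  · rintro ⟨-, hj⟩
    by_contra hij
    exact absurd (lt_of_lt_of_le h2 ((hS (by omega : i + 1 ≤ j + 1)).trans hj)) (lt_irrefl _)
  · intro hj
    exact ⟨by omega, (hS (by omega : j + 1 ≤ i)).trans h1⟩

lemma lt_of_mem_block {i i' : ℕ} {x y : Fin n} (hx : x ∈ block n l i) (hy : y ∈ block n l i')
    (h : i < i') : x < y := by
  rw [mem_block] at hx hy
  by_contra hxy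
  have := blockIdx_mono (l := l) (not_lt.1 hxy)
  omega

lemma keyB_block_lt {i i' : ℕ} (hcard : (block n l i).card = (block n l i').card)
    (hne : (block n l i').Nonempty) (h : i < i') : keyB n (block n l i) < keyB n (block n l i') :=
  keyB_lt_of_card_eq hcard (fun _ hx _ hy => lt_of_mem_block hx hy h) hne

lemma mem_normalizer_Young {B : Fin n → ℕ} {σ : Equiv.Perm (Fin n)} (τ : ℕ → ℕ)
    (h : ∀ x, B (σ x) = τ (B x)) :
    σ ∈ Subgroup.normalizer (Young n B : Set (Equiv.Perm (Fin n))) :=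
  Subgroup.mem_normalizer_fintype fun g (hg : ∀ x, B (g x) = B x) x => by
    change B (σ (g (σ⁻¹ x))) = B x
    rw [h, hg, ← h]
    exact congrArg B (σ.apply_symm_apply x)

lemma image_block {σ : Equiv.Perm (Fin n)} {τ : Equiv.Perm ℕ}
    (h : ∀ x, blockIdx n l (σ x) = τ (blockIdx n l x)) (i : ℕ) :
    (block n l i).image σ = block n l (τ i) := by
  ext y
  simp only [mem_image, mem_block]
  constructor
  · rintro ⟨x, rfl, rfl⟩
    exact h x
  · intro hy
    refine ⟨σ⁻¹ y, τ.injective ?_, σ.apply_symm_apply y⟩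
    rw [← h, ← hy]
    exact congrArg _ (σ.apply_symm_apply y)

variable (hsum : l.sum = n)
include hsum

lemma blockIdx_spec (x : Fin n) : blockIdx n l x < l.length ∧
    (l.take (blockIdx n l x)).sum ≤ x ∧ (x : ℕ) < (l.take (blockIdx n l x + 1)).sum := by
  obtain ⟨i, hi, h1, h2⟩ := Nat.exists_mem_Ico_of_lt (S := fun i => (l.take i).sum)
    (x := x) (by simp) (k := l.length) (by simp [hsum])
  rw [blockIdx_eq_of_mem_Ico hi h1 h2]
  exact ⟨hi, h1, h2⟩

lemma mem_block_iff {i : ℕ} (hi : i < l.length) {x : Fin n} :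
    x ∈ block n l i ↔ (l.take i).sum ≤ x ∧ (x : ℕ) < (l.take (i + 1)).sum := by
  rw [mem_block]
  constructor
  · rintro rfl
    exact (blockIdx_spec hsum x).2
  · exact fun h => blockIdx_eq_of_mem_Ico hi h.1 h.2

lemma card_block {i : ℕ} (hi : i < l.length) : (block n l i).card = l[i] := by
  have hval : (block n l i).map Fin.valEmbedding =
      Ico (l.take i).sum (l.take (i + 1)).sum := by
    ext y
    simp only [mem_map, Fin.valEmbedding_apply, mem_Ico]
    constructor
    · rintro ⟨x, hx, rfl⟩
      exact (mem_block_iff hsum hi).1 hx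
    · rintro ⟨h1, h2⟩
      have hy : y < n := by
        have := List.monotone_sum_take l (show i + 1 ≤ l.length by omega)
        simp only [List.take_length, hsum] at this
        omega
      exact ⟨⟨y, hy⟩, (mem_block_iff hsum hi).2 ⟨h1, h2⟩, rfl⟩
  rw [← card_map Fin.valEmbedding, hval, Nat.card_Ico, List.sum_take_succ l i hi]
  omega

lemma blockIdx_intervalSwapPerm {j : ℕ} (hj : j + 1 < l.length) (hjj : l[j] = l[j + 1])
    (h : (l.take j).sum + 2 * l[j] ≤ n) (x : Fin n) :
    blockIdx n l (intervalSwapPerm n (l.take j).sum l[j] h x) =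
      Equiv.swap j (j + 1) (blockIdx n l x) := by
  have hS := List.monotone_sum_take l
  have hS1 : (l.take (j + 1)).sum = (l.take j).sum + l[j] := List.sum_take_succ ..
  have hS2 : (l.take (j + 1 + 1)).sum = (l.take j).sum + 2 * l[j] :=
    List.sum_take_add_two_of_getElem_eq hj hjj
  have hval : (intervalSwapPerm n (l.take j).sum l[j] h x : ℕ) =
      intervalSwap (l.take j).sum l[j] x := rfl
  obtain ⟨hi, h1, h2⟩ := blockIdx_spec hsum x
  generalize blockIdx n l x = i at hi h1 h2 ⊢
  rcases lt_trichotomy i j with hij | rfl | hij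
  · have hx : (x : ℕ) < (l.take j).sum := h2.trans_le (hS (by omega))
    rw [Equiv.swap_apply_of_ne_of_ne (by omega) (by omega)]
    exact blockIdx_eq_of_mem_Ico hi (by simp [hval, intervalSwap, hx, h1])
      (by simp [hval, intervalSwap, hx, h2])
  · rw [Equiv.swap_apply_left]
    refine blockIdx_eq_of_mem_Ico hj ?_ ?_ <;> rw [hval] <;> unfold intervalSwap <;>
      split_ifs <;> omega
  rcases (show j + 1 ≤ i by omega).eq_or_lt with rfl | hij
  · rw [Equiv.swap_apply_right]
    refine blockIdx_eq_of_mem_Ico (by omega) ?_ ?_ <;> rw [hval] <;> unfold intervalSwap <;>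
      split_ifs <;> omega
  · have hx : (l.take j).sum + 2 * l[j] ≤ x := hS2 ▸ (hS (by omega)).trans h1
    rw [Equiv.swap_apply_of_ne_of_ne (by omega) (by omega)]
    refine blockIdx_eq_of_mem_Ico hi ?_ ?_ <;> rw [hval] <;> unfold intervalSwap <;>
      split_ifs <;> omega

lemma sgnP_stdPart_eq_one (hnd : l.Nodup) (g : Equiv.Perm (Fin n)) :
    sgnP n g (stdPart n l) = 1 := by
  refine sgnP_eq_one (fun s hs t ht hst => ?_) g
  obtain ⟨i, hi, rfl⟩ := mem_stdPart.1 hs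
  obtain ⟨i', hi', rfl⟩ := mem_stdPart.1 ht
  rw [card_block hsum hi, card_block hsum hi'] at hst
  rw [hnd.getElem_inj_iff.1 hst]

variable (hpos : ∀ p ∈ l, 1 ≤ p)
include hpos

lemma block_nonempty {i : ℕ} (hi : i < l.length) : (block n l i).Nonempty :=
  card_pos.1 (by rw [card_block hsum hi]; exact hpos _ (List.getElem_mem hi))

lemma keyB_block_succ_le {i j : ℕ} (hj : j + 1 < l.length) (hjj : l[j] = l[j + 1])
    (hi : i < l.length) (h : keyB n (block n l j) < keyB n (block n l i)) :
    keyB n (block n l (j + 1)) ≤ keyB n (block n l i) := by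
  have hcard : (block n l j).card = (block n l (j + 1)).card := by
    rw [card_block hsum (by omega), card_block hsum hj, hjj]
  rcases (card_le_of_keyB_le h.le).lt_or_eq with hlt | heq
  · exact (keyB_lt_of_card_lt (hcard ▸ hlt)).le
  rcases lt_trichotomy i (j + 1) with hij | rfl | hij
  · exfalso
    rcases (Nat.lt_succ_iff.1 hij).lt_or_eq with hij | rfl
    · exact (keyB_block_lt heq (block_nonempty hsum hpos (by omega)) hij).not_gt h
    · exact lt_irrefl _ h
  · exact le_rfl
  · exact (keyB_block_lt (hcard.symm.trans heq.symm) (block_nonempty hsum hpos hi) hij).le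

lemma exists_mem_normalizer_sgnP_eq_neg_one (hsort : l.Pairwise (· ≥ ·)) (hnd : ¬ l.Nodup) :
    ∃ σ ∈ Subgroup.normalizer (Young n (blockIdx n l) : Set (Equiv.Perm (Fin n))),
      sgnP n σ (stdPart n l) = -1 := by
  obtain ⟨j, hj, hjj⟩ := List.exists_getElem_eq_getElem_succ hsort hnd
  have h : (l.take j).sum + 2 * l[j] ≤ n := by
    rw [← List.sum_take_add_two_of_getElem_eq hj hjj, ← hsum]
    simpa using List.monotone_sum_take l (show j + 2 ≤ l.length by omega)
  have hσ := blockIdx_intervalSwapPerm hsum hj hjj h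
  have himage := image_block hσ
  refine ⟨_, mem_normalizer_Young _ hσ,
    sgnP_eq_neg_one (a := block n l j) (b := block n l (j + 1))
      (mem_stdPart.2 ⟨j, by omega, rfl⟩) (mem_stdPart.2 ⟨j + 1, hj, rfl⟩) ?_ ?_ ?_ ?_ ?_⟩
  · refine keyB_block_lt ?_ (block_nonempty hsum hpos hj) (Nat.lt_succ_self j)
    rw [card_block hsum (by omega), card_block hsum hj, hjj]
  · intro c hc
    obtain ⟨i, hi, rfl⟩ := mem_stdPart.1 hc
    exact keyB_block_succ_le hsum hpos hj hjj hi
  · rw [himage, Equiv.swap_apply_left]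
  · rw [himage, Equiv.swap_apply_right]
  · intro c hc hca hcb
    obtain ⟨i, hi, rfl⟩ := mem_stdPart.1 hc
    rw [himage, Equiv.swap_apply_of_ne_of_ne (by rintro rfl; exact hca rfl)
      (by rintro rfl; exact hcb rfl)]

end Blocks

section InvInd

variable {n : ℕ} {l : List ℕ}

lemma eq_const_of_mem_InvInd {f : Equiv.Perm (Fin n) → ℚ} (hf : f ∈ InvInd n l) :
    f = fun _ => f 1 :=
  funext fun x => by simpa using hf.2 x 1

lemma InvInd_eq_span_one
    (h : ∀ g ∈ Subgroup.normalizer (Young n (blockIdx n l) : Set (Equiv.Perm (Fin n))),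
      sgnP n g (stdPart n l) = 1) :
    InvInd n l = ℚ ∙ (fun _ => 1) := by
  refine le_antisymm (fun f hf => ?_) ((Submodule.span_singleton_le_iff_mem _ _).2 ?_)
  · rw [eq_const_of_mem_InvInd hf]
    exact Submodule.mem_span_singleton.2 ⟨f 1, by ext; simp⟩
  · exact ⟨fun g hg x => by simp [h g hg], fun _ _ => rfl⟩

lemma InvInd_eq_bot
    (h : ∃ g ∈ Subgroup.normalizer (Young n (blockIdx n l) : Set (Equiv.Perm (Fin n))),
      sgnP n g (stdPart n l) = -1) :
    InvInd n l = ⊥ := by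
  obtain ⟨g, hg, hsgn⟩ := h
  refine (Submodule.eq_bot_iff _).2 fun f hf => ?_
  have hconst := eq_const_of_mem_InvInd hf
  have hfg : f g = -f 1 := by simpa [hsgn] using hf.1 g hg 1
  have hf1 : f 1 = 0 := by linarith [congrFun hconst g]
  rw [hconst, hf1]
  rfl

end InvInd

/-- The multiplicity of the trivial `S_n`-representation in `Ind_{N_λ}^{S_n} V` is `1`
if the partition `λ` has no repeated parts, and `0` otherwise. -/
theorem stmt13 (n : ℕ) (l : List ℕ) (hsort : l.Pairwise (· ≥ ·))
    (hpos : ∀ p ∈ l, 1 ≤ p) (hsum : l.sum = n) :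
    Module.finrank ℚ (InvInd n l) = if l.Nodup then 1 else 0 := by
  split_ifs with hnd
  · rw [InvInd_eq_span_one fun g _ => sgnP_stdPart_eq_one hsum hnd g]
    exact finrank_span_singleton (Function.ne_iff.2 ⟨1, one_ne_zero⟩)
  · rw [InvInd_eq_bot (exists_mem_normalizer_sgnP_eq_neg_one hsum hpos hsort hnd), finrank_bot]
end
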